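/- arXiv:1808.06293 — 4 statements merged into one kernel-verified Lean document; each statement's English description precedes it below -/
import Mathlib

section
/- Let λ be a real number and let D be an edge-minimal λ-counterexample to Seymour's Second Neighborhood Conjecture (i.e., d_2^+(v) < λ·d_1^+(v) for every vertex v of D, and no digraph obtained from D by deleting edges has this property). Then for every subset S of the vertices of D such that N_1^+(S) is non-empty, we have d_2^+(S) < λ·d_1^+(S). -/
/-- `NStep A k u v`: there is a directed walk of length `k` from `u` to `v`
in the digraph with arc relation `A`. -/
def NStep {V : Type*} (A : V → V → Prop) : ℕ → V → V → Prop
  | 0 => Eq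
  | k + 1 => fun u w => ∃ x, A u x ∧ NStep A k x w

/-- An oriented simple graph: the arc relation has no loops and no 2-cycles. -/
def Oriented {V : Type*} (A : V → V → Prop) : Prop :=
  (∀ v, ¬ A v v) ∧ ∀ u v, A u v → ¬ A v u

/-- `N_k^+(v)`: the set of vertices `u` with `d(v,u) = k`, where `d` is the
shortest directed-path distance and `d(v,v)` is the length of the shortest
directed cycle through `v` (never `0`).  (Intended for `k ≥ 1`.) -/
def outNbhd {V : Type*} (A : V → V → Prop) (k : ℕ) (v : V) : Set V :=
  {u | NStep A k v u ∧ ∀ j, 1 ≤ j → j < k → ¬ NStep A j v u}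

/-- `N_k^-(v)`: the set of vertices `u` with `d(u,v) = k`. -/
def inNbhd {V : Type*} (A : V → V → Prop) (k : ℕ) (v : V) : Set V :=
  {u | NStep A k u v ∧ ∀ j, 1 ≤ j → j < k → ¬ NStep A j u v}

/-- `d_k^+(v) = |N_k^+(v)|`. -/
noncomputable def outDeg {V : Type*} (A : V → V → Prop) (k : ℕ) (v : V) : ℕ :=
  (outNbhd A k v).ncard

/-- `d_k^-(v) = |N_k^-(v)|`. -/
noncomputable def inDeg {V : Type*} (A : V → V → Prop) (k : ℕ) (v : V) : ℕ :=
  (inNbhd A k v).ncard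

/-- `N_k^+(S)`: the set of vertices `u` with `min_{s ∈ S} d(s,u) = k`. -/
def setOutNbhd {V : Type*} (A : V → V → Prop) (k : ℕ) (S : Set V) : Set V :=
  {u | (∃ s ∈ S, NStep A k s u) ∧ ∀ j, 1 ≤ j → j < k → ∀ s ∈ S, ¬ NStep A j s u}

/-- `d_k^+(S) = |N_k^+(S)|`. -/
noncomputable def setOutDeg {V : Type*} (A : V → V → Prop) (k : ℕ) (S : Set V) : ℕ :=
  (setOutNbhd A k S).ncard

/-- A vertex is a Seymour vertex if `d_1^+(v) ≤ d_2^+(v)`. -/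
def SeymourVertex {V : Type*} (A : V → V → Prop) (v : V) : Prop :=
  outDeg A 1 v ≤ outDeg A 2 v

/-- A digraph is strongly connected if every vertex reaches every other by a
directed path. -/
def StronglyConnected {V : Type*} (A : V → V → Prop) : Prop :=
  ∀ u v : V, ∃ k, NStep A k u v

/-- A digraph is `m`-free if it contains no directed cycle of length at most
`m` (equivalently, no closed walk of length between `1` and `m`). -/
def MFree {V : Type*} (A : V → V → Prop) (m : ℕ) : Prop :=
  ∀ v, ∀ k, 1 ≤ k → k ≤ m → ¬ NStep A k v v

/-- `D` is a `λ`-counterexample (to the SNC): `d_2^+(v) < λ·d_1^+(v)` for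
every vertex `v`. -/
def IsLambdaCounterexample {V : Type*} (A : V → V → Prop) (lam : ℝ) : Prop :=
  ∀ v, (outDeg A 2 v : ℝ) < lam * (outDeg A 1 v : ℝ)

/-- `D` is an edge-minimal `λ`-counterexample: it is a `λ`-counterexample and
no digraph obtained from it by deleting one or more edges is one. -/
def EdgeMinimalCounterexample {V : Type*} (A : V → V → Prop) (lam : ℝ) : Prop :=
  IsLambdaCounterexample A lam ∧
    ∀ B : V → V → Prop, (∀ u v, B u v → A u v) → B ≠ A →
      ¬ IsLambdaCounterexample B lam

set_option linter.unusedSectionVars false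

section SNCHelpers

variable {V : Type*}

/-- Out-neighborhood of a set of vertices. -/
def sncNp (A : V → V → Prop) (X : Set V) : Set V := {w | ∃ x ∈ X, A x w}

lemma snc_nstep_one {A : V → V → Prop} {u v : V} : NStep A 1 u v ↔ A u v := by
  simp [NStep]

lemma snc_nstep_two {A : V → V → Prop} {u v : V} :
    NStep A 2 u v ↔ ∃ x, A u x ∧ A x v := by
  simp [NStep]

lemma snc_out1 (A : V → V → Prop) (v : V) : outNbhd A 1 v = {u | A v u} := by
  ext u
  simp only [outNbhd, Set.mem_setOf_eq, snc_nstep_one]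
  exact ⟨fun h => h.1, fun h => ⟨h, fun j hj hj' => absurd (hj.trans_lt hj') (by omega)⟩⟩

lemma snc_out2 (A : V → V → Prop) (v : V) :
    outNbhd A 2 v = sncNp A {u | A v u} \ {u | A v u} := by
  ext u
  simp only [outNbhd, Set.mem_setOf_eq, Set.mem_diff, Set.mem_setOf_eq, sncNp]
  constructor
  · rintro ⟨h2, hj⟩
    obtain ⟨x, hx1, hx2⟩ := snc_nstep_two.1 h2
    exact ⟨⟨x, hx1, hx2⟩, fun h => hj 1 le_rfl one_lt_two (snc_nstep_one.2 h)⟩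
  · rintro ⟨⟨x, hx1, hx2⟩, hn⟩
    refine ⟨snc_nstep_two.2 ⟨x, hx1, hx2⟩, fun j hj hj' => ?_⟩
    interval_cases j
    exact fun h => hn (snc_nstep_one.1 h)

lemma snc_setOut1 (A : V → V → Prop) (S : Set V) :
    setOutNbhd A 1 S = sncNp A S := by
  ext u
  simp only [setOutNbhd, Set.mem_setOf_eq, sncNp, snc_nstep_one]
  exact ⟨fun h => h.1, fun h => ⟨h, fun j hj hj' => absurd (hj.trans_lt hj') (by omega)⟩⟩

lemma snc_setOut2 (A : V → V → Prop) (S : Set V) :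
    setOutNbhd A 2 S = sncNp A (sncNp A S) \ sncNp A S := by
  ext u
  simp only [setOutNbhd, Set.mem_setOf_eq, Set.mem_diff, sncNp]
  constructor
  · rintro ⟨⟨s, hs, h2⟩, hj⟩
    obtain ⟨x, hx1, hx2⟩ := snc_nstep_two.1 h2
    refine ⟨⟨x, ⟨s, hs, hx1⟩, hx2⟩, ?_⟩
    rintro ⟨s', hs', hs'u⟩
    exact hj 1 le_rfl one_lt_two s' hs' (snc_nstep_one.2 hs'u)
  · rintro ⟨⟨x, ⟨s, hs, hsx⟩, hxu⟩, hn⟩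
    refine ⟨⟨s, hs, snc_nstep_two.2 ⟨x, hsx, hxu⟩⟩, fun j hj hj' => ?_⟩
    interval_cases j
    exact fun s' hs' h => hn ⟨s', hs', snc_nstep_one.1 h⟩

variable [Fintype V] {A : V → V → Prop} {lam : ℝ}

/-- Statement (a): the counterexample property at a vertex, in `sncNp` form. -/
lemma snc_lemA (hce : IsLambdaCounterexample A lam) (v : V) :
    ((sncNp A (sncNp A {v}) \ sncNp A {v}).ncard : ℝ)
      < lam * ((sncNp A {v}).ncard : ℝ) := by
  have h1 : sncNp A {v} = {u | A v u} := by
    ext u; simp [sncNp]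
  have := hce v
  rw [outDeg, outDeg, snc_out1, snc_out2] at this
  rw [h1]
  exact this

/-- Statement (b): from edge-minimality, for every vertex `u` and every proper
subset `K ⊊ N_1^+(u)`, we have `λ·|K| ≤ |N^+(K) \ K|`. -/
lemma snc_lemB (hA : Oriented A) (hmin : EdgeMinimalCounterexample A lam)
    (u : V) (K : Set V) (hK : K ⊆ {w | A u w}) (hne : K ≠ {w | A u w}) :
    lam * (K.ncard : ℝ) ≤ ((sncNp A K \ K).ncard : ℝ) := by
  classical
  set B : V → V → Prop := fun a b => A a b ∧ (a = u → b ∈ K) with hB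
  have hBA : ∀ a b, B a b → A a b := fun a b h => h.1
  obtain ⟨y, hy, hyK⟩ : ∃ y, A u y ∧ y ∉ K := by
    by_contra h
    push_neg at h
    exact hne (Set.Subset.antisymm hK fun b hb => h b hb)
  have hBneq : B ≠ A := by
    intro h
    have hBuy : B u y := by rw [h]; exact hy
    exact hyK (hBuy.2 rfl)
  obtain ⟨w, hw⟩ : ∃ w, lam * ((outDeg B 1 w : ℕ) : ℝ) ≤ ((outDeg B 2 w : ℕ) : ℝ) := by
    have h := hmin.2 B hBA hBneq
    unfold IsLambdaCounterexample at h
    push_neg at h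
    exact h
  have hwu : w = u := by
    by_contra hne'
    have h1 : outNbhd B 1 w = outNbhd A 1 w := by
      rw [snc_out1, snc_out1]
      ext b
      simp only [Set.mem_setOf_eq, hB]
      exact ⟨fun h => h.1, fun h => ⟨h, fun hc => absurd hc hne'⟩⟩
    have h2 : outNbhd B 2 w ⊆ outNbhd A 2 w := by
      rw [snc_out2, snc_out2]
      rintro z ⟨⟨x, hx1, hx2⟩, hz⟩
      refine ⟨⟨x, hx1.1, hx2.1⟩, fun hAz => hz ?_⟩
      exact ⟨hAz, fun hc => absurd hc hne'⟩
    have hle : (outDeg B 2 w : ℝ) ≤ (outDeg A 2 w : ℝ) := by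
      exact_mod_cast Set.ncard_le_ncard h2 (Set.toFinite _)
    have heq : (outDeg B 1 w : ℝ) = (outDeg A 1 w : ℝ) := by
      rw [outDeg, outDeg, h1]
    have := hmin.1 w
    rw [heq] at hw
    linarith
  subst hwu
  have h1 : outNbhd B 1 w = K := by
    rw [snc_out1]
    ext b
    constructor
    · exact fun h => h.2 rfl
    · exact fun h => ⟨hK h, fun _ => h⟩
  have h2 : outNbhd B 2 w = sncNp A K \ K := by
    rw [snc_out2]
    have hN1 : {b | B w b} = K := by
      ext b
      constructor
      · exact fun h => h.2 rfl
      · exact fun h => ⟨hK h, fun _ => h⟩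
    rw [hN1]
    ext z
    simp only [Set.mem_diff, sncNp, Set.mem_setOf_eq]
    constructor
    · rintro ⟨⟨x, hx, hxz⟩, hz⟩
      exact ⟨⟨x, hx, hxz.1⟩, hz⟩
    · rintro ⟨⟨x, hx, hxz⟩, hz⟩
      refine ⟨⟨x, hx, hB ▸ ⟨hxz, fun hxu => absurd (hxu ▸ hK hx) (hA.1 w)⟩⟩, hz⟩
  rw [outDeg, outDeg, h1, h2] at hw
  exact hw

/-- Submodular counting inequality. -/
lemma snc_submod (A : V → V → Prop) (X Y : Set V) :
    (sncNp A (X ∪ Y) \ (X ∪ Y)).ncard + (sncNp A (X ∩ Y) \ (X ∩ Y)).ncard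
      ≤ (sncNp A X \ X).ncard + (sncNp A Y \ Y).ncard := by
  classical
  set P := sncNp A X \ X with hP
  set Q := sncNp A Y \ Y with hQ
  set U := sncNp A (X ∪ Y) \ (X ∪ Y) with hU
  set I := sncNp A (X ∩ Y) \ (X ∩ Y) with hI
  have hNpUnion : sncNp A (X ∪ Y) = sncNp A X ∪ sncNp A Y := by
    ext w
    simp only [sncNp, Set.mem_setOf_eq, Set.mem_union]
    constructor
    · rintro ⟨x, hx | hx, hxw⟩
      · exact Or.inl ⟨x, hx, hxw⟩
      · exact Or.inr ⟨x, hx, hxw⟩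
    · rintro (⟨x, hx, hxw⟩ | ⟨x, hx, hxw⟩)
      · exact ⟨x, Or.inl hx, hxw⟩
      · exact ⟨x, Or.inr hx, hxw⟩
  have hNpInterX : sncNp A (X ∩ Y) ⊆ sncNp A X := by
    rintro w ⟨x, hx, hxw⟩; exact ⟨x, hx.1, hxw⟩
  have hNpInterY : sncNp A (X ∩ Y) ⊆ sncNp A Y := by
    rintro w ⟨x, hx, hxw⟩; exact ⟨x, hx.2, hxw⟩
  have hUsub : U ⊆ P ∪ Q := by
    rintro z ⟨hz1, hz2⟩
    rw [hNpUnion] at hz1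
    rcases hz1 with hz1 | hz1
    · exact Or.inl ⟨hz1, fun h => hz2 (Or.inl h)⟩
    · exact Or.inr ⟨hz1, fun h => hz2 (Or.inr h)⟩
  have hA2sub : I \ (X ∪ Y) ⊆ P ∩ Q := by
    rintro z ⟨⟨hz1, _⟩, hz2⟩
    exact ⟨⟨hNpInterX hz1, fun h => hz2 (Or.inl h)⟩,
      ⟨hNpInterY hz1, fun h => hz2 (Or.inr h)⟩⟩
  have hA3sub : I ∩ (X ∪ Y) ⊆ P ∪ Q := by
    rintro z ⟨⟨hz1, hz2⟩, hz3⟩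
    by_cases hzX : z ∈ X
    · have hzY : z ∉ Y := fun h => hz2 ⟨hzX, h⟩
      exact Or.inr ⟨hNpInterY hz1, hzY⟩
    · exact Or.inl ⟨hNpInterX hz1, hzX⟩
  have hIcard : I.ncard ≤ (I \ (X ∪ Y)).ncard + (I ∩ (X ∪ Y)).ncard := by
    conv_lhs => rw [← Set.diff_union_inter I (X ∪ Y)]
    exact Set.ncard_union_le _ _
  have hdisj : Disjoint U (I ∩ (X ∪ Y)) := by
    rw [Set.disjoint_left]
    rintro z ⟨_, hz2⟩ ⟨_, hz3⟩
    exact hz2 hz3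
  have hUnionEq : (U ∪ I ∩ (X ∪ Y)).ncard = U.ncard + (I ∩ (X ∪ Y)).ncard :=
    Set.ncard_union_eq hdisj (Set.toFinite _) (Set.toFinite _)
  have hUnionLe : (U ∪ I ∩ (X ∪ Y)).ncard ≤ (P ∪ Q).ncard :=
    Set.ncard_le_ncard (Set.union_subset hUsub hA3sub) (Set.toFinite _)
  have hA2Le : (I \ (X ∪ Y)).ncard ≤ (P ∩ Q).ncard :=
    Set.ncard_le_ncard hA2sub (Set.toFinite _)
  have hPQ : (P ∪ Q).ncard + (P ∩ Q).ncard = P.ncard + Q.ncard :=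
    Set.ncard_union_add_ncard_inter P Q (Set.toFinite _) (Set.toFinite _)
  omega

/-- The key induction: the set counterexample inequality for out-neighborhoods
of nonempty finite vertex sets. -/
lemma snc_main (hA : Oriented A) (hmin : EdgeMinimalCounterexample A lam) :
    ∀ F : Finset V, F.Nonempty →
      ((sncNp A (sncNp A ↑F) \ sncNp A ↑F).ncard : ℝ)
        < lam * (((sncNp A (↑F : Set V)).ncard : ℕ) : ℝ) := by
  classical
  intro F
  induction F using Finset.induction_on with
  | empty => rintro ⟨x, hx⟩; simp at hx
  | @insert a F ha IH =>
    intro _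
    have hcoe : ((insert a F : Finset V) : Set V) = insert a (↑F : Set V) := by
      simp
    have hNpIns : sncNp A ((insert a F : Finset V) : Set V)
        = sncNp A {a} ∪ sncNp A (↑F : Set V) := by
      rw [hcoe]
      ext w
      simp only [sncNp, Set.mem_setOf_eq, Set.mem_union, Set.mem_insert_iff,
        Set.mem_singleton_iff]
      constructor
      · rintro ⟨x, hx | hx, hxw⟩
        · exact Or.inl ⟨x, hx, hxw⟩
        · exact Or.inr ⟨x, hx, hxw⟩
      · rintro (⟨x, hx, hxw⟩ | ⟨x, hx, hxw⟩)
        · exact ⟨x, Or.inl hx, hxw⟩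
        · exact ⟨x, Or.inr hx, hxw⟩
    rcases F.eq_empty_or_nonempty with rfl | hFne
    · have : sncNp A ((insert a (∅ : Finset V) : Finset V) : Set V) = sncNp A {a} := by
        rw [hNpIns]
        have : sncNp A ((∅ : Finset V) : Set V) = ∅ := by
          ext w; simp [sncNp]
        rw [this, Set.union_empty]
      rw [this]
      exact snc_lemA hmin.1 a
    · set X := sncNp A (↑F : Set V) with hX
      set Y := sncNp A ({a} : Set V) with hY
      have hIH := IH hFne
      have hYA := snc_lemA hmin.1 a
      rw [hNpIns]
      by_cases hsub : Y ⊆ X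
      · rw [Set.union_eq_self_of_subset_left hsub]
        exact hIH
      · obtain ⟨y, hyY, hyX⟩ := Set.not_subset.1 hsub
        have hYeq : Y = {w | A a w} := by ext w; simp [hY, sncNp]
        have hKsub : X ∩ Y ⊆ {w | A a w} := fun w hw => hYeq ▸ hw.2
        have hKne : X ∩ Y ≠ {w | A a w} := by
          intro h
          rw [← hYeq] at h
          exact hyX (h.symm ▸ hyY : y ∈ X ∩ Y).1
        have hB := snc_lemB hA hmin a (X ∩ Y) hKsub hKne
        have hsm := snc_submod A X Y
        have hcard : (X ∪ Y).ncard + (X ∩ Y).ncard = X.ncard + Y.ncard :=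
          Set.ncard_union_add_ncard_inter X Y (Set.toFinite _) (Set.toFinite _)
        have hcardR : ((X ∪ Y).ncard : ℝ) + ((X ∩ Y).ncard : ℝ)
            = (X.ncard : ℝ) + (Y.ncard : ℝ) := by exact_mod_cast hcard
        have hsmR : ((sncNp A (X ∪ Y) \ (X ∪ Y)).ncard : ℝ)
              + ((sncNp A (X ∩ Y) \ (X ∩ Y)).ncard : ℝ)
            ≤ ((sncNp A X \ X).ncard : ℝ) + ((sncNp A Y \ Y).ncard : ℝ) := by
          exact_mod_cast hsm
        have hmul : lam * ((X ∪ Y).ncard : ℝ)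
            = lam * (X.ncard : ℝ) + lam * (Y.ncard : ℝ) - lam * ((X ∩ Y).ncard : ℝ) := by
          linear_combination lam * hcardR
        rw [Set.union_comm Y X]
        linarith

end SNCHelpers

/-- If `D` is an edge-minimal `λ`-counterexample to the SNC,
then every subset `S` of its vertices with `N_1^+(S)` non-empty satisfies
`d_2^+(S) < λ·d_1^+(S)`. -/
theorem stmt_0 {V : Type*} [Fintype V] (A : V → V → Prop) (lam : ℝ)
    (hA : Oriented A) (hmin : EdgeMinimalCounterexample A lam)
    (S : Set V) (hS : (setOutNbhd A 1 S).Nonempty) :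
    (setOutDeg A 2 S : ℝ) < lam * (setOutDeg A 1 S : ℝ) := by
  classical
  obtain ⟨u0, hu0⟩ := hS
  rw [snc_setOut1] at hu0
  obtain ⟨s0, hs0, _⟩ := hu0
  set F : Finset V := (S.toFinite).toFinset with hF
  have hFS : (↑F : Set V) = S := Set.Finite.coe_toFinset _
  have hFne : F.Nonempty := by
    refine ⟨s0, ?_⟩
    rw [Set.Finite.mem_toFinset]
    exact hs0
  have h := snc_main hA hmin F hFne
  rw [hFS] at h
  rw [setOutDeg, setOutDeg, snc_setOut1, snc_setOut2]
  exact h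
end

section
/- Suppose that every finite strongly connected oriented simple graph on at least two vertices contains a non-empty proper subset S of its vertices with d_1^+(S) ≤ d_2^+(S). Then every non-empty finite oriented simple graph contains a Seymour vertex. -/
lemma nstep_snoc' {V : Type*} {A : V → V → Prop} :
    ∀ {k : ℕ} {u x y : V}, NStep A k u x → A x y → NStep A (k + 1) u y := by
  intro k
  induction k with
  | zero =>
    intro u x y h hxy
    have hux : u = x := h
    exact ⟨y, hux ▸ hxy, rfl⟩
  | succ k ih =>
    intro u x y h hxy
    obtain ⟨z, huz, hrest⟩ := h
    exact ⟨z, huz, ih hrest hxy⟩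

lemma nstep_one {V : Type*} {A : V → V → Prop} {u v : V} : NStep A 1 u v ↔ A u v := by
  constructor
  · rintro ⟨x, hx, h⟩; have : x = v := h; exact this ▸ hx
  · intro h; exact ⟨v, h, rfl⟩

lemma nstep_two {V : Type*} {A : V → V → Prop} {u v : V} :
    NStep A 2 u v ↔ ∃ x, A u x ∧ A x v := by
  constructor
  · rintro ⟨x, hx, h⟩; exact ⟨x, hx, nstep_one.mp h⟩
  · rintro ⟨x, hx, h⟩; exact ⟨x, hx, nstep_one.mpr h⟩

/-- first out-neighbourhood as a plain set -/
def Row {V : Type*} (A : V → V → Prop) (u : V) : Set V := {y | A u y}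

/-- out-neighbourhood of a set -/
def OutB {V : Type*} (A : V → V → Prop) (X : Set V) : Set V := {y | ∃ x ∈ X, A x y}

lemma outNbhd_one_eq {V : Type*} (A : V → V → Prop) (v : V) :
    outNbhd A 1 v = Row A v := by
  ext u
  constructor
  · rintro ⟨h, -⟩; exact nstep_one.mp h
  · intro h; exact ⟨nstep_one.mpr h, fun j hj hj' => absurd hj (by omega)⟩

lemma outNbhd_two_eq {V : Type*} (A : V → V → Prop) (v : V) :
    outNbhd A 2 v = OutB A (Row A v) \ Row A v := by
  ext y
  constructor
  · rintro ⟨h2, hall⟩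
    obtain ⟨x, hvx, hxy⟩ := nstep_two.mp h2
    exact ⟨⟨x, hvx, hxy⟩, fun hb => hall 1 le_rfl one_lt_two (nstep_one.mpr hb)⟩
  · rintro ⟨⟨x, hvx, hxy⟩, hny⟩
    refine ⟨nstep_two.mpr ⟨x, hvx, hxy⟩, ?_⟩
    intro j hj1 hj2
    have : j = 1 := by omega
    subst this
    exact fun hstep => hny (nstep_one.mp hstep)

lemma setOutNbhd_one_eq {V : Type*} (A : V → V → Prop) (S : Set V) :
    setOutNbhd A 1 S = OutB A S := by
  ext u
  constructor
  · rintro ⟨⟨s, hs, h⟩, -⟩; exact ⟨s, hs, nstep_one.mp h⟩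
  · rintro ⟨s, hs, h⟩
    exact ⟨⟨s, hs, nstep_one.mpr h⟩, fun j hj hj' => absurd hj (by omega)⟩

lemma setOutNbhd_two_eq {V : Type*} (A : V → V → Prop) (S : Set V) :
    setOutNbhd A 2 S = OutB A (OutB A S) \ OutB A S := by
  ext y
  constructor
  · rintro ⟨⟨s, hs, h2⟩, hall⟩
    obtain ⟨x, hsx, hxy⟩ := nstep_two.mp h2
    refine ⟨⟨x, ⟨s, hs, hsx⟩, hxy⟩, ?_⟩
    rintro ⟨s', hs', hb⟩
    exact hall 1 le_rfl one_lt_two s' hs' (nstep_one.mpr hb)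
  · rintro ⟨⟨x, ⟨s, hs, hsx⟩, hxy⟩, hny⟩
    refine ⟨⟨s, hs, nstep_two.mpr ⟨x, hsx, hxy⟩⟩, ?_⟩
    intro j hj1 hj2 s' hs'
    have : j = 1 := by omega
    subst this
    exact fun hstep => hny ⟨s', hs', nstep_one.mp hstep⟩

lemma outB_union {V : Type*} (A : V → V → Prop) (X Y : Set V) :
    OutB A (X ∪ Y) = OutB A X ∪ OutB A Y := by
  ext y
  simp only [OutB, Set.mem_setOf_eq, Set.mem_union]
  constructor
  · rintro ⟨x, hx | hx, hxy⟩
    · exact Or.inl ⟨x, hx, hxy⟩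
    · exact Or.inr ⟨x, hx, hxy⟩
  · rintro (⟨x, hx, hxy⟩ | ⟨x, hx, hxy⟩)
    · exact ⟨x, Or.inl hx, hxy⟩
    · exact ⟨x, Or.inr hx, hxy⟩

lemma outB_mono {V : Type*} (A : V → V → Prop) {X Y : Set V} (h : X ⊆ Y) :
    OutB A X ⊆ OutB A Y := by
  rintro y ⟨x, hx, hxy⟩; exact ⟨x, h hx, hxy⟩

lemma ncard_nn {V : Type} [Fintype V] (A : V → V → Prop) (X : Set V) :
    (X ∪ OutB A X).ncard = X.ncard + (OutB A X \ X).ncard := by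
  rw [← Set.union_diff_self]
  exact Set.ncard_union_eq disjoint_sdiff_self_right (Set.toFinite _) (Set.toFinite _)

/-- The supermodular union induction. -/
lemma union_bound {V : Type} [Fintype V] (A : V → V → Prop)
    (h1 : ∀ u : V, (Row A u ∪ OutB A (Row A u)).ncard + 1 ≤ 2 * (Row A u).ncard)
    (h2 : ∀ (u : V) (J : Set V), J ⊆ Row A u → J ≠ Row A u →
      2 * J.ncard ≤ (J ∪ OutB A J).ncard) :
    ∀ F : Finset V, F.Nonempty →
      (OutB A ↑F ∪ OutB A (OutB A ↑F)).ncard + 1 ≤ 2 * (OutB A ↑F).ncard := by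
  intro F
  induction F using Finset.cons_induction with
  | empty => intro h; exact absurd h (by simp)
  | cons s F hs ih =>
    intro _
    have hcoe : (↑(Finset.cons s F hs) : Set V) = {s} ∪ ↑F := by
      rw [Finset.coe_cons, Set.insert_eq]
    have hrow : OutB A ({s} : Set V) = Row A s := by
      ext y; simp [OutB, Row]
    have hsplit : OutB A ↑(Finset.cons s F hs) = Row A s ∪ OutB A ↑F := by
      rw [hcoe, outB_union, hrow]
    rcases F.eq_empty_or_nonempty with hF | hF
    · subst hF
      have hemp : OutB A (↑(∅ : Finset V) : Set V) = ∅ := by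
        ext y
        constructor
        · rintro ⟨x, hx, -⟩
          exact absurd hx (by simp)
        · intro hy
          exact absurd hy (Set.notMem_empty y)
      rw [hsplit, hemp, Set.union_empty]; exact h1 s
    · have IH := ih hF
      set T := Row A s with hT
      set X := OutB A (↑F : Set V) with hX
      rw [hsplit]
      by_cases hTX : T ⊆ X
      · rwa [Set.union_eq_self_of_subset_left hTX]
      · -- I = X ∩ T proper subset of T = Row A s
        have hIsub : X ∩ T ⊆ Row A s := Set.inter_subset_right
        have hIne : X ∩ T ≠ Row A s := by
          intro he
          apply hTX
          rw [hT, ← he]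
          exact Set.inter_subset_left
        have hI := h2 s (X ∩ T) hIsub hIne
        -- NN distributes / monotone
        have hNNu : (T ∪ X) ∪ OutB A (T ∪ X) = (T ∪ OutB A T) ∪ (X ∪ OutB A X) := by
          rw [outB_union]
          ext y
          simp only [Set.mem_union]
          tauto
        have hNNi : (X ∩ T) ∪ OutB A (X ∩ T) ⊆ (T ∪ OutB A T) ∩ (X ∪ OutB A X) := by
          intro y hy
          rcases hy with hy | hy
          · exact ⟨Or.inl hy.2, Or.inl hy.1⟩
          · exact ⟨Or.inr (outB_mono A Set.inter_subset_right hy),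
              Or.inr (outB_mono A Set.inter_subset_left hy)⟩
        have e1 : ((T ∪ OutB A T) ∪ (X ∪ OutB A X)).ncard
            + ((T ∪ OutB A T) ∩ (X ∪ OutB A X)).ncard
            = (T ∪ OutB A T).ncard + (X ∪ OutB A X).ncard :=
          Set.ncard_union_add_ncard_inter _ _ (Set.toFinite _) (Set.toFinite _)
        have e2 : (T ∪ X).ncard + (T ∩ X).ncard = T.ncard + X.ncard :=
          Set.ncard_union_add_ncard_inter _ _ (Set.toFinite _) (Set.toFinite _)
        have e3 : ((X ∩ T) ∪ OutB A (X ∩ T)).ncard ≤ ((T ∪ OutB A T) ∩ (X ∪ OutB A X)).ncard :=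
          Set.ncard_le_ncard hNNi (Set.toFinite _)
        have e4 : ((T ∪ X) ∪ OutB A (T ∪ X)).ncard
            = ((T ∪ OutB A T) ∪ (X ∪ OutB A X)).ncard := by rw [hNNu]
        have e5 : (X ∩ T).ncard = (T ∩ X).ncard := by rw [Set.inter_comm]
        have hbase := h1 s
        rw [← hT] at hbase
        omega

/-- A "bad" digraph: finite, oriented, nonempty, with no Seymour vertex,
having `n` vertices and `m` arcs. -/
def Bad (n m : ℕ) : Prop :=
  ∃ (V : Type) (inst : Fintype V) (A : V → V → Prop), Nonempty V ∧ Oriented A ∧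
    (∀ v, ¬ SeymourVertex A v) ∧ @Fintype.card V inst = n ∧
    ({p : V × V | A p.1 p.2}).ncard = m

/-- If every finite strongly connected oriented simple graph
on at least two vertices contains a non-empty proper subset `S` of its
vertices with `d_1^+(S) ≤ d_2^+(S)`, then every non-empty finite oriented
simple graph contains a Seymour vertex. -/
theorem stmt_4
    (h : ∀ (V : Type) (instV : Fintype V) (A : V → V → Prop), Oriented A →
      StronglyConnected A → 1 < @Fintype.card V instV →
      ∃ S : Set V, S.Nonempty ∧ S ≠ Set.univ ∧
        setOutDeg A 1 S ≤ setOutDeg A 2 S) :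
    ∀ (V : Type) (_ : Fintype V) (A : V → V → Prop), Nonempty V →
      Oriented A → ∃ v : V, SeymourVertex A v := by
  intro V instV A hne hor
  by_contra hcon
  push_neg at hcon
  classical
  have hbad : ∃ n m, Bad n m :=
    ⟨Fintype.card V, ({p : V × V | A p.1 p.2}).ncard, V, instV, A, hne, hor, hcon, rfl, rfl⟩
  have hm : ∃ m, Bad (Nat.find hbad) m := Nat.find_spec hbad
  obtain ⟨W, instW, B, hWne, hBor, hBno, hWcard, hBarcs⟩ := Nat.find_spec hm
  have hminn : ∀ n', n' < Nat.find hbad → ¬ ∃ m, Bad n' m := fun n' hlt => Nat.find_min hbad hlt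
  have hminm : ∀ m', m' < Nat.find hm → ¬ Bad (Nat.find hbad) m' :=
    fun m' hlt => Nat.find_min hm hlt
  -- Step 1 : the minimal bad digraph is strongly connected
  have hSC : StronglyConnected B := by
    by_contra hsc
    unfold StronglyConnected at hsc
    push_neg at hsc
    obtain ⟨u, w, hw⟩ := hsc
    set R : Set W := {x | ∃ k, NStep B k u x} with hR
    have huR : u ∈ R := ⟨0, rfl⟩
    have hwR : w ∉ R := by rintro ⟨k, hk⟩; exact hw k hk
    have hclosed : ∀ x ∈ R, ∀ y, B x y → y ∈ R := by
      rintro x ⟨k, hk⟩ y hxy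
      exact ⟨k + 1, nstep_snoc' hk hxy⟩
    haveI instR : Fintype ↥R := Fintype.ofFinite ↥R
    set B' : ↥R → ↥R → Prop := fun a b => B a.1 b.1 with hB'
    have hor' : Oriented B' := ⟨fun a => hBor.1 a.1, fun a b hab => hBor.2 a.1 b.1 hab⟩
    have him1 : ∀ v : ↥R, outNbhd B 1 v.1 = Subtype.val '' outNbhd B' 1 v := by
      intro v
      rw [outNbhd_one_eq, outNbhd_one_eq]
      ext y
      constructor
      · intro hy
        have hyR : y ∈ R := hclosed v.1 v.2 y hy
        exact ⟨⟨y, hyR⟩, hy, rfl⟩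
      · rintro ⟨⟨y', hy'⟩, hb, rfl⟩
        exact hb
    have him2 : ∀ v : ↥R, outNbhd B 2 v.1 = Subtype.val '' outNbhd B' 2 v := by
      intro v
      rw [outNbhd_two_eq, outNbhd_two_eq]
      ext y
      constructor
      · rintro ⟨⟨x, hvx, hxy⟩, hny⟩
        have hxR : x ∈ R := hclosed v.1 v.2 x hvx
        have hyR : y ∈ R := hclosed x hxR y hxy
        exact ⟨⟨y, hyR⟩, ⟨⟨⟨x, hxR⟩, hvx, hxy⟩, fun hb => hny hb⟩, rfl⟩
      · rintro ⟨⟨y', hy'⟩, ⟨⟨⟨x, hxR⟩, hvx, hxy⟩, hnb⟩, rfl⟩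
        exact ⟨⟨x, hvx, hxy⟩, fun hb => hnb hb⟩
    have hno' : ∀ v : ↥R, ¬ SeymourVertex B' v := by
      intro v hv
      apply hBno v.1
      unfold SeymourVertex outDeg at hv ⊢
      rw [him1 v, him2 v, Set.ncard_image_of_injective _ Subtype.val_injective,
        Set.ncard_image_of_injective _ Subtype.val_injective]
      exact hv
    have hcardlt : Fintype.card ↥R < Nat.find hbad := by
      rw [← hWcard]
      exact Fintype.card_lt_of_injective_of_notMem Subtype.val Subtype.val_injective
        (by rintro ⟨⟨y, hy⟩, rfl⟩; exact hwR hy)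
    exact hminn _ hcardlt ⟨_, ↥R, instR, B', ⟨⟨u, huR⟩⟩, hor', hno', rfl, rfl⟩
  -- Step 2 : at least two vertices
  have h2lt : 1 < Fintype.card W := by
    obtain ⟨v₀⟩ := hWne
    have hlt : outDeg B 2 v₀ < outDeg B 1 v₀ := not_le.mp (hBno v₀)
    have hpos : 0 < outDeg B 1 v₀ := by omega
    unfold outDeg at hpos
    have hne0 : (outNbhd B 1 v₀).ncard ≠ 0 := by omega
    obtain ⟨x, hx⟩ := Set.nonempty_of_ncard_ne_zero hne0
    rw [outNbhd_one_eq] at hx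
    have hxv : x ≠ v₀ := fun he => hBor.1 v₀ (he ▸ hx)
    exact Fintype.one_lt_card_iff_nontrivial.mpr ⟨⟨x, v₀, hxv⟩⟩
  -- Step 3 : get the qualifying set from the hypothesis
  obtain ⟨S, hSne, -, hSineq⟩ := h W instW B hBor hSC h2lt
  -- Step 4 : deletion lemma (edge-minimality)
  have hkey : ∀ (u : W) (J : Set W), J ⊆ Row B u → J ≠ Row B u →
      J.ncard ≤ (OutB B J \ J).ncard := by
    intro u J hJsub hJne
    set B2 : W → W → Prop := fun a b => B a b ∧ (a = u → b ∈ J) with hB2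
    have hsub : {p : W × W | B2 p.1 p.2} ⊂ {p : W × W | B p.1 p.2} := by
      constructor
      · rintro ⟨a, b⟩ hab; exact hab.1
      · intro hss
        obtain ⟨v, hv, hvJ⟩ := Set.exists_of_ssubset (ssubset_of_subset_of_ne hJsub hJne)
        have hmem : ((u, v) : W × W) ∈ {p : W × W | B p.1 p.2} := hv
        have hBv : B2 u v := hss hmem
        exact hvJ (hBv.2 rfl)
    have hm' : ({p : W × W | B2 p.1 p.2}).ncard < Nat.find hm := by
      rw [← hBarcs]
      exact Set.ncard_lt_ncard hsub (Set.toFinite _)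
    have hor2 : Oriented B2 :=
      ⟨fun v hv => hBor.1 v hv.1, fun a b hab hba => hBor.2 a b hab.1 hba.1⟩
    have hsey : ∃ w, SeymourVertex B2 w := by
      by_contra hno2
      push_neg at hno2
      exact hminm _ hm' ⟨W, instW, B2, hWne, hor2, hno2, hWcard, rfl⟩
    obtain ⟨w, hw⟩ := hsey
    have hwu : w = u := by
      by_contra hne'
      apply hBno w
      unfold SeymourVertex outDeg at hw ⊢
      have e1 : outNbhd B2 1 w = outNbhd B 1 w := by
        rw [outNbhd_one_eq, outNbhd_one_eq]
        ext y
        constructor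
        · exact fun hy => hy.1
        · exact fun hy => ⟨hy, fun he => absurd he hne'⟩
      have e2 : outNbhd B2 2 w ⊆ outNbhd B 2 w := by
        rw [outNbhd_two_eq, outNbhd_two_eq]
        rintro y ⟨⟨x, hwx, hxy⟩, hny⟩
        refine ⟨⟨x, hwx.1, hxy.1⟩, ?_⟩
        intro hb
        exact hny ⟨hb, fun he => absurd he hne'⟩
      rw [← e1]
      exact le_trans hw (Set.ncard_le_ncard e2 (Set.toFinite _))
    subst hwu
    have huJ : w ∉ J := fun hu => hBor.1 w (hJsub hu)
    have e1 : outNbhd B2 1 w = J := by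
      rw [outNbhd_one_eq]
      ext y
      constructor
      · rintro ⟨hb, hy⟩; exact hy rfl
      · intro hy; exact ⟨hJsub hy, fun _ => hy⟩
    have e2 : outNbhd B2 2 w = OutB B J \ J := by
      rw [outNbhd_two_eq]
      ext y
      constructor
      · rintro ⟨⟨x, hux, hxy⟩, hny⟩
        have hxJ : x ∈ J := hux.2 rfl
        refine ⟨⟨x, hxJ, hxy.1⟩, ?_⟩
        intro hyJ
        exact hny ⟨hJsub hyJ, fun _ => hyJ⟩
      · rintro ⟨⟨x, hxJ, hxy⟩, hyJ⟩
        have hxu : x ≠ w := fun he => huJ (he ▸ hxJ)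
        refine ⟨⟨x, ⟨hJsub hxJ, fun _ => hxJ⟩, ⟨hxy, fun he => absurd he hxu⟩⟩, ?_⟩
        intro hb
        exact hyJ (hb.2 rfl)
    unfold SeymourVertex outDeg at hw
    rw [e1, e2] at hw
    exact hw
  -- Step 5 : per-vertex facts and conclusion
  have h1 : ∀ u : W, (Row B u ∪ OutB B (Row B u)).ncard + 1 ≤ 2 * (Row B u).ncard := by
    intro u
    have hlt : outDeg B 2 u < outDeg B 1 u := not_le.mp (hBno u)
    unfold outDeg at hlt
    rw [outNbhd_one_eq, outNbhd_two_eq] at hlt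
    have hnn := ncard_nn B (Row B u)
    omega
  have h2 : ∀ (u : W) (J : Set W), J ⊆ Row B u → J ≠ Row B u →
      2 * J.ncard ≤ (J ∪ OutB B J).ncard := by
    intro u J hs hne'
    have hk := hkey u J hs hne'
    have hnn := ncard_nn B J
    omega
  have hSfin : S.Finite := Set.toFinite S
  have hFne : hSfin.toFinset.Nonempty := by
    rw [Set.Finite.toFinset_nonempty]
    exact hSne
  have hub := union_bound B h1 h2 hSfin.toFinset hFne
  rw [hSfin.coe_toFinset] at hub
  unfold setOutDeg at hSineq
  rw [setOutNbhd_one_eq, setOutNbhd_two_eq] at hSineq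
  have hnn := ncard_nn B (OutB B S)
  omega
end

section
/- Let D be a non-empty finite oriented simple graph, let m ≥ 2 be an integer, and let γ > 0 be a real number. If for every vertex v of D we have d_m^+(v) < γ·(d_1^+(v) + d_2^+(v) + ··· + d_{m-1}^+(v)), then there exists a vertex w of D with d_m^-(w) < γ·(d_1^-(w) + d_2^-(w) + ··· + d_{m-1}^-(w)). -/
lemma sum_outDeg_eq_sum_inDeg {V : Type*} [Fintype V] (A : V → V → Prop) (k : ℕ) :
    ∑ v : V, outDeg A k v = ∑ w : V, inDeg A k w := by
  classical
  have h1 : ∀ v : V, outDeg A k v =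
      (Finset.univ.filter (fun u => u ∈ outNbhd A k v)).card := by
    intro v
    rw [outDeg, Set.ncard_eq_toFinset_card']
    congr 1
    ext u
    simp [Set.mem_toFinset]
  have h2 : ∀ w : V, inDeg A k w =
      (Finset.univ.filter (fun v => v ∈ inNbhd A k w)).card := by
    intro w
    rw [inDeg, Set.ncard_eq_toFinset_card']
    congr 1
    ext v
    simp [Set.mem_toFinset]
  simp_rw [h1, h2, Finset.card_filter]
  rw [Finset.sum_comm]
  refine Finset.sum_congr rfl fun u _ => Finset.sum_congr rfl fun v _ => ?_
  have : u ∈ outNbhd A k v ↔ v ∈ inNbhd A k u := Iff.rfl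
  simp [this]

/-- Let `D` be a non-empty finite oriented simple graph,
`m ≥ 2`, and `γ > 0`.  If `d_m^+(v) < γ·(d_1^+(v) + ⋯ + d_{m-1}^+(v))` for
every vertex `v`, then some vertex `w` satisfies
`d_m^-(w) < γ·(d_1^-(w) + ⋯ + d_{m-1}^-(w))`. -/
theorem stmt_8 {V : Type*} [Fintype V] [Nonempty V] (A : V → V → Prop)
    (hA : Oriented A) (m : ℕ) (hm : 2 ≤ m) (γ : ℝ) (hγ : 0 < γ)
    (h : ∀ v : V, (outDeg A m v : ℝ) <
      γ * ∑ i ∈ Finset.Icc 1 (m - 1), (outDeg A i v : ℝ)) :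
    ∃ w : V, (inDeg A m w : ℝ) <
      γ * ∑ i ∈ Finset.Icc 1 (m - 1), (inDeg A i w : ℝ) := by
  by_contra hc
  push_neg at hc
  have hout : (∑ v : V, (outDeg A m v : ℝ)) <
      ∑ v : V, γ * ∑ i ∈ Finset.Icc 1 (m - 1), (outDeg A i v : ℝ) :=
    Finset.sum_lt_sum_of_nonempty Finset.univ_nonempty (fun v _ => h v)
  have hin : (∑ w : V, γ * ∑ i ∈ Finset.Icc 1 (m - 1), (inDeg A i w : ℝ))
      ≤ ∑ w : V, (inDeg A m w : ℝ) :=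
    Finset.sum_le_sum (fun w _ => hc w)
  have e1 : (∑ v : V, (outDeg A m v : ℝ)) = ∑ w : V, (inDeg A m w : ℝ) := by
    push_cast [← Nat.cast_sum]
    exact_mod_cast congrArg (Nat.cast : ℕ → ℝ) (sum_outDeg_eq_sum_inDeg A m)
  have e2 : (∑ v : V, ∑ i ∈ Finset.Icc 1 (m - 1), (outDeg A i v : ℝ))
      = ∑ w : V, ∑ i ∈ Finset.Icc 1 (m - 1), (inDeg A i w : ℝ) := by
    rw [Finset.sum_comm, Finset.sum_comm (s := Finset.univ)]
    refine Finset.sum_congr rfl fun i _ => ?_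
    exact_mod_cast congrArg (Nat.cast : ℕ → ℝ) (sum_outDeg_eq_sum_inDeg A i)
  simp_rw [← Finset.mul_sum] at hout hin
  rw [e1, e2] at hout
  linarith
end

section
/- For each integer m ≥ 2, let r_m denote the unique positive real root of the equation x^m + x^{m-1} = 1. Then m·(1 − r_m) tends to ln 2 as m tends to infinity. -/
/-! Writing `r = exp (-L)`, the equation `r ^ m + r ^ (m - 1) = 1` becomes
`(m - 1) L = log (1 + r)`. Since `log (1 + r) ≤ log 2`, this forces `L → 0`, hence `r → 1`,
hence `m L → log 2`. Finally `1 - exp (-L)` lies between `exp (-L) L` and `L`, and `m` times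
either bound tends to `log 2`. -/

open Filter Topology Real

lemma exp_neg_mul_le_one_sub_exp_neg (t : ℝ) : exp (-t) * t ≤ 1 - exp (-t) := by
  have h := mul_le_mul_of_nonneg_left (add_one_le_exp t) (exp_pos (-t)).le
  rw [← exp_add, neg_add_cancel, exp_zero] at h
  linarith

lemma one_sub_exp_neg_le (t : ℝ) : 1 - exp (-t) ≤ t := by
  linarith [one_sub_le_exp_neg t]

lemma tendsto_zero_of_tendsto_natCast_sub_mul {t : ℕ → ℝ} {a c : ℝ}
    (h : Tendsto (fun n : ℕ => ((n : ℝ) - a) * t n) atTop (𝓝 c)) :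
    Tendsto t atTop (𝓝 0) := by
  have hden : Tendsto (fun n : ℕ => (n : ℝ) - a) atTop atTop :=
    tendsto_atTop_add_const_right _ _ tendsto_natCast_atTop_atTop
  refine (h.div_atTop hden).congr' ?_
  filter_upwards [hden.eventually_gt_atTop 0] with n hn
  field_simp

lemma tendsto_zero_of_natCast_sub_mul_le {t : ℕ → ℝ} {a C : ℝ}
    (h0 : ∀ᶠ n in atTop, 0 ≤ t n) (hC : ∀ᶠ n : ℕ in atTop, ((n : ℝ) - a) * t n ≤ C) :
    Tendsto t atTop (𝓝 0) := by
  have hden : Tendsto (fun n : ℕ => (n : ℝ) - a) atTop atTop :=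
    tendsto_atTop_add_const_right _ _ tendsto_natCast_atTop_atTop
  refine tendsto_of_tendsto_of_tendsto_of_le_of_le' tendsto_const_nhds
    ((tendsto_const_nhds (x := C)).div_atTop hden) h0 ?_
  filter_upwards [hC, hden.eventually_gt_atTop 0] with n hn hpos
  rwa [le_div_iff₀ hpos, mul_comm]

lemma tendsto_natCast_mul_of_tendsto_natCast_sub_one_mul {t : ℕ → ℝ} {c : ℝ}
    (h : Tendsto (fun n : ℕ => ((n : ℝ) - 1) * t n) atTop (𝓝 c)) :
    Tendsto (fun n : ℕ => (n : ℝ) * t n) atTop (𝓝 c) := by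
  simpa [sub_mul] using h.add (tendsto_zero_of_tendsto_natCast_sub_mul h)

lemma tendsto_natCast_mul_one_sub_exp_neg {t : ℕ → ℝ} {c : ℝ}
    (h : Tendsto (fun n : ℕ => (n : ℝ) * t n) atTop (𝓝 c)) :
    Tendsto (fun n : ℕ => (n : ℝ) * (1 - exp (-t n))) atTop (𝓝 c) := by
  have ht : Tendsto t atTop (𝓝 0) :=
    tendsto_zero_of_tendsto_natCast_sub_mul (a := 0) (by simpa using h)
  have hexp : Tendsto (fun n => exp (-t n)) atTop (𝓝 1) := by
    simpa using (ht.neg).rexp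
  refine tendsto_of_tendsto_of_tendsto_of_le_of_le (by simpa using hexp.mul h) h
    (fun n => ?_) (fun n => ?_)
  · calc exp (-t n) * ((n : ℝ) * t n) = n * (exp (-t n) * t n) := by ring
      _ ≤ n * (1 - exp (-t n)) :=
        mul_le_mul_of_nonneg_left (exp_neg_mul_le_one_sub_exp_neg _) n.cast_nonneg
  · exact mul_le_mul_of_nonneg_left (one_sub_exp_neg_le _) n.cast_nonneg

lemma natCast_sub_one_mul_neg_log_eq {x : ℝ} {m : ℕ} (hm : 1 ≤ m) (hx : 0 < x)
    (h : x ^ m + x ^ (m - 1) = 1) : ((m : ℝ) - 1) * -log x = log (1 + x) := by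
  obtain ⟨k, rfl⟩ := Nat.exists_eq_add_of_le' hm
  have hprod : x ^ k * (1 + x) = 1 := by
    rw [Nat.add_sub_cancel, pow_succ] at h
    linear_combination h
  have hlog := congrArg log hprod
  rw [log_mul (by positivity) (by positivity), log_one, log_pow] at hlog
  push_cast
  linarith

/-- If `r m` denotes the unique positive real root of
`x^m + x^(m-1) = 1` (which lies in `(0,1)`), then `m·(1 - r m) → ln 2` as
`m → ∞`. -/
theorem stmt_13 (r : ℕ → ℝ)
    (hr : ∀ m, 2 ≤ m → 0 < r m ∧ r m < 1 ∧ r m ^ m + r m ^ (m - 1) = 1) :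
    Filter.Tendsto (fun m : ℕ => (m : ℝ) * (1 - r m)) Filter.atTop
      (nhds (Real.log 2)) := by
  set L : ℕ → ℝ := fun m => -log (r m)
  have hr' : ∀ᶠ m in atTop, 0 < r m ∧ r m < 1 ∧ r m ^ m + r m ^ (m - 1) = 1 :=
    eventually_atTop.2 ⟨2, hr⟩
  have hexpL : ∀ᶠ m in atTop, exp (-L m) = r m := by
    filter_upwards [hr'] with m hm
    simp [L, exp_log hm.1]
  have hroot : ∀ᶠ m : ℕ in atTop, ((m : ℝ) - 1) * L m = log (1 + r m) := by
    filter_upwards [hr', eventually_ge_atTop 1] with m hm hm1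
    exact natCast_sub_one_mul_neg_log_eq hm1 hm.1 hm.2.2
  have hL0 : Tendsto L atTop (𝓝 0) := by
    refine tendsto_zero_of_natCast_sub_mul_le (a := 1) (C := log 2) ?_ ?_
    · filter_upwards [hr'] with m hm
      exact neg_nonneg.2 (log_nonpos hm.1.le hm.2.1.le)
    · filter_upwards [hr', hroot] with m hm hmL
      rw [hmL]
      exact log_le_log (by linarith [hm.1]) (by linarith [hm.2.1])
  have hr1 : Tendsto r atTop (𝓝 1) := by
    refine Tendsto.congr' hexpL ?_
    simpa using (hL0.neg).rexp
  have hmL : Tendsto (fun m : ℕ => ((m : ℝ) - 1) * L m) atTop (𝓝 (log 2)) := by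
    refine Tendsto.congr' (EventuallyEq.symm hroot) ?_
    have h2 : Tendsto (fun m => 1 + r m) atTop (𝓝 2) := by
      simpa [one_add_one_eq_two] using hr1.const_add 1
    exact (continuousAt_log two_ne_zero).tendsto.comp h2
  refine (tendsto_natCast_mul_one_sub_exp_neg
    (tendsto_natCast_mul_of_tendsto_natCast_sub_one_mul hmL)).congr' ?_
  filter_upwards [hexpL] with m hm
  rw [hm]
end
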